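/- The semigroup T presented by ⟨a, b | b*a*a*b = b*a⟩ is not LEF. -/

import Mathlib

/-!
In a finite semigroup the relation `baab = ba` forces `baba = ba`: iterating it against an
idempotent power `aⁿ` gives `ba = ba¹⁺ⁿ`. A LEF approximation of the six elements
`a, b, ba, baa, bab, baba` of `T` would carry the relation into a finite semigroup and hence
identify `baba` with `ba`; but these differ in `T`, as an action of `a` and `b` on `ℕ` shows.
-/

namespace Stmt8

/-- A semigroup `S` is LEF if for every finite subset `H` of `S` there exist a finite
semigroup `F` and a function `f : S → F` injective on `H` such that
`f (x * y) = f x * f y` whenever `x, y, x * y ∈ H`. -/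
def IsLEF (S : Type*) [Semigroup S] : Prop :=
  ∀ H : Finset S, ∃ (F : Type) (_ : Semigroup F) (_ : Fintype F) (f : S → F),
    Set.InjOn f ↑H ∧
      ∀ x ∈ H, ∀ y ∈ H, x * y ∈ H → f (x * y) = f x * f y

/-- The generator `a` of the free semigroup on two generators. -/
def a : FreeSemigroup (Fin 2) := FreeSemigroup.of 0

/-- The generator `b` of the free semigroup on two generators. -/
def b : FreeSemigroup (Fin 2) := FreeSemigroup.of 1

/-- The defining relation `b * a * a * b = b * a`. -/
def rel : FreeSemigroup (Fin 2) → FreeSemigroup (Fin 2) → Prop :=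
  fun x y => x = b * a * a * b ∧ y = b * a

/-- The semigroup `T = ⟨a, b ∣ baab = ba⟩`. -/
def T : Type := (conGen rel).Quotient

instance : Semigroup T := Con.semigroup _

section FiniteMonoid

variable {M : Type*} [Monoid M]

theorem exists_pos_isIdempotentElem_pow [Finite M] (x : M) :
    ∃ n, 0 < n ∧ IsIdempotentElem (x ^ n) := by
  obtain ⟨i, j, hij, hx⟩ := Finite.exists_ne_map_eq_of_infinite (x ^ · : ℕ → M)
  wlog hlt : i < j generalizing i j
  · exact this j i hij.symm hx.symm (by omega)
  have periodic : ∀ k m, i ≤ m → x ^ (m + (j - i) * k) = x ^ m := by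
    intro k
    induction k with
    | zero => simp
    | succ k ih =>
      intro m hm
      calc x ^ (m + (j - i) * (k + 1)) = x ^ j * x ^ (m - i + (j - i) * k) := by
            rw [← pow_add]; congr 1; rw [Nat.mul_succ]; omega
        _ = x ^ (m + (j - i) * k) := by
            rw [← hx, ← pow_add]; congr 1; omega
        _ = x ^ m := ih m hm
  refine ⟨(j - i) * (i + 1), Nat.mul_pos (by omega) (by omega), ?_⟩
  rw [IsIdempotentElem, ← pow_add]
  exact periodic _ _ (by nlinarith [Nat.sub_pos_of_lt hlt])

variable {x y : M}

theorem mul_pow_add_two_mul_eq (h : y * x * x * y = y * x) (m : ℕ) :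
    y * x ^ (m + 2) * y = y * x ^ (m + 1) := by
  induction m with
  | zero => simpa [pow_succ, mul_assoc] using h
  | succ m ih =>
    calc y * x ^ (m + 3) * y = y * x ^ (m + 1) * (x * x * y) := by
          simp only [pow_succ, mul_assoc]
      _ = y * x ^ (m + 2) * (y * x * x * y) := by rw [← ih]; simp only [mul_assoc]
      _ = y * x ^ (m + 2) * y * x := by rw [h]; simp only [mul_assoc]
      _ = y * x ^ (m + 2) := by rw [ih, mul_assoc, ← pow_succ]

theorem mul_pow_add_mul_pow_eq (h : y * x * x * y = y * x) (m k : ℕ) :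
    y * x ^ (m + 1 + k) * y ^ k = y * x ^ (m + 1) := by
  induction k with
  | zero => simp
  | succ k ih =>
    rw [pow_succ', ← mul_assoc, show m + 1 + (k + 1) = m + k + 2 by omega,
      mul_pow_add_two_mul_eq h, ← ih, add_right_comm]

/-- Writing `zₘ = y xᵐ`, the relation gives `zₘ = zₘ₊ₖ yᵏ`; for an idempotent `xⁿ` this yields
`z₁ = z₁₊ₙ`, and then `y x y x = z₁₊ₙ y x = zₙ x = z₁`. -/
theorem Monoid.mul_mul_mul_eq_of_finite [Finite M] (h : y * x * x * y = y * x) :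
    y * x * y * x = y * x := by
  obtain ⟨n, hn, hidem⟩ := exists_pos_isIdempotentElem_pow x
  have hx : x ^ (n + 1 + n) = x ^ (0 + 1 + n) := by
    rw [zero_add, add_comm n 1, add_assoc, pow_add x 1 (n + n), pow_add x n n, hidem.eq, ← pow_add]
  have hper : y * x ^ (n + 1) = y * x := by
    calc y * x ^ (n + 1) = y * x ^ (n + 1 + n) * y ^ n := (mul_pow_add_mul_pow_eq h n n).symm
      _ = y * x ^ (0 + 1 + n) * y ^ n := by rw [hx]
      _ = y * x := by rw [mul_pow_add_mul_pow_eq h, zero_add, pow_one]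
  obtain ⟨m, rfl⟩ : ∃ m, n = m + 1 := ⟨n - 1, by omega⟩
  calc y * x * y * x = y * x ^ (m + 2) * y * x := by rw [← hper]
    _ = y * x := by rw [mul_pow_add_two_mul_eq h, mul_assoc, ← pow_succ, hper]

end FiniteMonoid

theorem Semigroup.mul_mul_mul_eq_of_finite {S : Type*} [Semigroup S] [Finite S] {x y : S}
    (h : y * x * x * y = y * x) : y * x * y * x = y * x := by
  have : Finite (WithOne S) := inferInstanceAs (Finite (Option S))
  apply WithOne.coe_injective
  push_cast
  exact Monoid.mul_mul_mul_eq_of_finite (by exact_mod_cast congrArg ((↑) : S → WithOne S) h)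

theorem not_isLEF_of_mul_mul_mul_ne {S : Type*} [Semigroup S] {x y : S}
    (h : y * x * x * y = y * x) (hne : y * x * y * x ≠ y * x) : ¬ IsLEF S := by
  classical
  intro hLEF
  obtain ⟨F, _, _, f, hinj, hmul⟩ := hLEF {x, y, y * x, y * x * x, y * x * y, y * x * y * x}
  have hyx : f (y * x) = f y * f x := hmul _ (by simp) _ (by simp) (by simp)
  have hyxx : f (y * x * x) = f y * f x * f x := by
    rw [hmul _ (by simp) _ (by simp) (by simp), hyx]
  have hrel : f y * f x * f x * f y = f y * f x := by
    rw [← hyxx, ← hmul _ (by simp) _ (by simp) (by simp [h]), h, hyx]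
  have hyxyx : f (y * x * y * x) = f y * f x * f y * f x := by
    rw [hmul _ (by simp) _ (by simp) (by simp), hmul _ (by simp) _ (by simp) (by simp), hyx]
  refine hne (hinj (by simp) (by simp) ?_)
  rw [hyxyx, Semigroup.mul_mul_mul_eq_of_finite hrel, hyx]

/-- `modelA n` is the largest odd number below `n` (or `0`), so `modelA ∘ modelA ∘ modelB = modelA`
while `modelA (modelB (modelA 0)) = 1 ≠ 0 = modelA 0`. -/
def modelA : Function.End ℕ := fun n => 2 * (n / 2) - 1

def modelB : Function.End ℕ := fun n => n + 2

def model : FreeSemigroup (Fin 2) →ₙ* Function.End ℕ := FreeSemigroup.lift ![modelA, modelB]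

theorem conGen_rel_le_ker_model : conGen rel ≤ Con.ker model := by
  rw [Con.conGen_le]
  rintro x y ⟨rfl, rfl⟩
  funext n
  change modelB (modelA (modelA (modelB n))) = modelB (modelA n)
  simp only [modelA, modelB]
  omega

theorem not_conGen_rel_baba_ba : ¬ conGen rel (b * a * b * a) (b * a) := by
  intro hba
  have h0 : modelB (modelA (modelB (modelA 0))) = modelB (modelA 0) :=
    congrFun (conGen_rel_le_ker_model hba) 0
  simp [modelA, modelB] at h0

/-- The semigroup `T = ⟨a, b ∣ baab = ba⟩` is not LEF. -/
theorem T_not_isLEF : ¬ IsLEF T :=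
  not_isLEF_of_mul_mul_mul_ne (S := T)
    (x := (a : (conGen rel).Quotient)) (y := (b : (conGen rel).Quotient))
    ((Con.eq _).mpr (ConGen.Rel.of _ _ ⟨rfl, rfl⟩))
    (fun h => not_conGen_rel_baba_ba ((Con.eq _).mp h))

end Stmt8
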